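/- arXiv:2409.03633 — 3 statements merged into one kernel-verified Lean document; each statement's English description precedes it below -/
import Mathlib

section
/- Let σ ∈ S_{n+1} and let 1 denote the all-ones vector in ℝ^n. Then for each i = 1, ..., n, (P_σ^T 1)_i = σ(i+1) − σ(i). -/
/-- The `j`-th positive simple root `e_{j+1} - e_j` of the type-A root system in `ℝ^{n+1}`. -/
noncomputable def simpleRoot (n : ℕ) (j : Fin n) : Fin (n + 1) → ℝ :=
  fun k => (if k = j.succ then (1 : ℝ) else 0) - (if k = j.castSucc then (1 : ℝ) else 0)

/-- The linear action `R_σ` of a permutation `σ` on `ℝ^{n+1}` sending the standard basis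
vector `e_i` to `e_{σ i}`. -/
noncomputable def permAction (n : ℕ) (σ : Equiv.Perm (Fin (n + 1)))
    (v : Fin (n + 1) → ℝ) : Fin (n + 1) → ℝ :=
  fun j => v (σ.symm j)

lemma simpleRoot_weight (n : ℕ) (j : Fin n) :
    ∑ k : Fin (n + 1), (k : ℝ) * simpleRoot n j k = 1 := by
  simp only [simpleRoot, mul_sub, mul_ite, mul_one, mul_zero]
  rw [Finset.sum_sub_distrib, Finset.sum_ite_eq' _ j.succ, Finset.sum_ite_eq' _ j.castSucc]
  simp [Fin.val_succ]

/-- Let `P` be the matrix of the restriction of `R_σ` to the sum-zero hyperplane of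
`ℝ^{n+1}`, written in the basis of positive simple roots, and let `1` denote the
all-ones vector of `ℝ^n`.  Then `(Pᵀ 1) i = σ(i+1) − σ(i)` for all `i`. -/
theorem transpose_permTransform_apply_ones (n : ℕ) (σ : Equiv.Perm (Fin (n + 1)))
    (P : Matrix (Fin n) (Fin n) ℝ)
    (hP : ∀ j, permAction n σ (simpleRoot n j) = ∑ i : Fin n, P i j • simpleRoot n i)
    (i : Fin n) :
    P.transpose.mulVec (fun _ => (1 : ℝ)) i
      = ((σ i.succ).val : ℝ) - ((σ i.castSucc).val : ℝ) := by
  have key := congrArg (fun v : Fin (n + 1) → ℝ => ∑ k : Fin (n + 1), (k : ℝ) * v k) (hP i)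
  have hL : ∑ k : Fin (n + 1), (k : ℝ) * permAction n σ (simpleRoot n i) k
      = ((σ i.succ).val : ℝ) - ((σ i.castSucc).val : ℝ) := by
    rw [← Equiv.sum_comp σ (fun k => (k : ℝ) * permAction n σ (simpleRoot n i) k)]
    simp only [permAction, Equiv.symm_apply_apply, simpleRoot, mul_sub, mul_ite, mul_one,
      mul_zero]
    rw [Finset.sum_sub_distrib, Finset.sum_ite_eq' _ i.succ, Finset.sum_ite_eq' _ i.castSucc]
    simp
  have hR : ∑ k : Fin (n + 1), (k : ℝ) * (∑ m : Fin n, P m i • simpleRoot n m) k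
      = ∑ m : Fin n, P m i := by
    simp only [Finset.sum_apply, Pi.smul_apply, smul_eq_mul, Finset.mul_sum]
    rw [Finset.sum_comm]
    refine Finset.sum_congr rfl fun m _ => ?_
    have := simpleRoot_weight n m
    calc ∑ k : Fin (n + 1), (k : ℝ) * (P m i * simpleRoot n m k)
        = P m i * ∑ k : Fin (n + 1), (k : ℝ) * simpleRoot n m k := by
          rw [Finset.mul_sum]; exact Finset.sum_congr rfl fun k _ => by ring
      _ = P m i := by rw [this, mul_one]
  rw [hL, hR] at key
  simpa [Matrix.mulVec, Matrix.transpose, dotProduct] using key.symm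
end

section
/- Fix n ≥ 2. For each interval A ⊆ [n] define ρ(A) ∈ ℝ^{n−1} by ρ(A)_i = 1 if both i and i+1 belong to A, and ρ(A)_i = 0 otherwise. If B is a bracketing of [n], then the set of vectors {ρ(A) : A ∈ B, A a non-singleton proper bracket, A ≠ [n]} together with the all-ones vector 1 = ρ([n]) is linearly independent in ℝ^{n−1}. -/
/-- A bracketing of `[n] = {1, …, n}`: a collection of nonempty intervals of `[n]`
containing `[n]` itself and all singletons, such that any two members are nested or
disjoint. -/
def IsBracketing (n : ℕ) (B : Set (Finset ℕ)) : Prop :=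
  (∀ A ∈ B, ∃ i j, 1 ≤ i ∧ i ≤ j ∧ j ≤ n ∧ A = Finset.Icc i j) ∧
  Finset.Icc 1 n ∈ B ∧
  (∀ i, 1 ≤ i → i ≤ n → ({i} : Finset ℕ) ∈ B) ∧
  (∀ A₁ ∈ B, ∀ A₂ ∈ B, (A₁ ∩ A₂).Nonempty → A₁ ⊆ A₂ ∨ A₂ ⊆ A₁)

/-- The ray generator `ρ(A) ∈ ℝ^{n-1}` of an interval `A ⊆ [n]`: its `i`-th coordinate
(for the 0-indexed `i : Fin (n-1)`, corresponding to the pair `(i+1, i+2)` of `[n]`)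
is `1` if both `i+1` and `i+2` belong to `A`, and `0` otherwise. -/
noncomputable def rayGen (n : ℕ) (A : Finset ℕ) : Fin (n - 1) → ℝ :=
  fun i => if (i : ℕ) + 1 ∈ A ∧ (i : ℕ) + 2 ∈ A then 1 else 0

theorem aux_lam (n : ℕ) (hn : 2 ≤ n) {ι : Type*} (a b : ι → ℕ)
    (hab : ∀ o, 1 ≤ a o ∧ a o < b o ∧ b o ≤ n)
    (hinj : ∀ o o' : ι, a o = a o' → b o = b o' → o = o')
    (hlam : ∀ o o' : ι, a o ≤ b o' → a o' ≤ b o →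
      (a o' ≤ a o ∧ b o ≤ b o') ∨ (a o ≤ a o' ∧ b o' ≤ b o))
    (v : ι → Fin (n - 1) → ℝ)
    (hv : ∀ o i, v o i = if a o ≤ (i : ℕ) + 1 ∧ (i : ℕ) + 2 ≤ b o then 1 else 0) :
    LinearIndependent ℝ v := by
  classical
  rw [linearIndependent_iff']
  intro s g hsum o₀ ho₀
  suffices H : ∀ k, ∀ o ∈ s, n - (b o - a o) < k → g o = 0 by
    exact H n o₀ ho₀ (by have := hab o₀; omega)
  intro k
  induction k with
  | zero => intro o _ h; omega
  | succ k ih =>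
    intro o ho hμ
    obtain ⟨ha1, habo, hbn⟩ := hab o
    set t := s.filter (fun o' => o' ≠ o ∧ a o' = a o ∧ b o' < b o) with ht
    set c := max (a o) (t.sup b) with hc
    have hca : a o ≤ c := le_max_left _ _
    have hsuple : t.sup b ≤ b o - 1 := by
      apply Finset.sup_le
      intro o' h
      rw [ht, Finset.mem_filter] at h
      omega
    have hcb : c < b o := by
      have : c ≤ b o - 1 := hc ▸ max_le (by omega) hsuple
      omega
    have hpriv : ∀ o' ∈ s, o' ≠ o → a o' ≤ c → c + 1 ≤ b o' →
        a o' ≤ a o ∧ b o ≤ b o' ∧ ¬(a o' = a o ∧ b o' = b o) := by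
      intro o' hs' hne hQ1 hQ2
      obtain ⟨ha1', habo', hbn'⟩ := hab o'
      rcases hlam o o' (by omega) (by omega) with ⟨h5, h6⟩ | ⟨h5, h6⟩
      · exact ⟨h5, h6, fun ⟨e1, e2⟩ => hne (hinj o' o e1 e2)⟩
      · exfalso
        by_cases heq : a o' = a o
        · have hblt : b o' < b o := by
            rcases lt_or_eq_of_le h6 with h | h
            · exact h
            · exact absurd (hinj o' o heq h) hne
          have hmem : o' ∈ t := by
            rw [ht, Finset.mem_filter]; exact ⟨hs', hne, heq, hblt⟩
          have h1 := Finset.le_sup (f := b) hmem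
          have h2 : t.sup b ≤ c := le_max_right _ _
          omega
        · have halt : a o < a o' := lt_of_le_of_ne h5 (Ne.symm heq)
          have h' : c = a o ∨ c = t.sup b := by rw [hc]; exact max_choice _ _
          have hc2 : c = t.sup b := by
            rcases h' with h | h
            · omega
            · exact h
          have htne : t.Nonempty := by
            by_contra hemp
            rw [Finset.not_nonempty_iff_eq_empty] at hemp
            rw [hemp, Finset.sup_empty] at hc2
            simp at hc2
            omega
          obtain ⟨o'', ho''t, ho''⟩ := Finset.exists_mem_eq_sup t htne b
          rw [ht, Finset.mem_filter] at ho''t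
          obtain ⟨hs'', hne'', ha'', hb''⟩ := ho''t
          have hbo'' : b o'' = c := by omega
          rcases hlam o' o'' (by omega) (by omega) with ⟨h7, h8⟩ | ⟨h7, h8⟩
          · omega
          · omega
    have hcn : c < n := by omega
    set j : Fin (n - 1) := ⟨c - 1, by omega⟩ with hj
    have hjv : (j : ℕ) = c - 1 := rfl
    have h0 : ∑ o' ∈ s, g o' * v o' j = 0 := by
      have h := congrFun hsum j
      simpa [Finset.sum_apply] using h
    have h1 : ∑ o' ∈ s, g o' * v o' j
        = ∑ o' ∈ s.filter (fun o' => a o' ≤ c ∧ c + 1 ≤ b o'), g o' := by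
      rw [Finset.sum_filter]
      refine Finset.sum_congr rfl fun o' _ => ?_
      rw [hv]
      have e1 : (j : ℕ) + 1 = c := by omega
      have e2 : (j : ℕ) + 2 = c + 1 := by omega
      rw [e1, e2]
      split <;> simp
    have h2 : ∑ o' ∈ s.filter (fun o' => a o' ≤ c ∧ c + 1 ≤ b o'), g o' = g o := by
      apply Finset.sum_eq_single_of_mem
      · rw [Finset.mem_filter]; exact ⟨ho, hca, by omega⟩
      · intro o' ho' hne
        rw [Finset.mem_filter] at ho'
        obtain ⟨hs', hQ1, hQ2⟩ := ho'
        obtain ⟨h5, h6, h7⟩ := hpriv o' hs' hne hQ1 hQ2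
        have := hab o'
        exact ih o' hs' (by omega)
    rw [h1, h2] at h0
    exact h0

/-- For a bracketing `B` of `[n]` (`n ≥ 2`), the vectors `ρ(A)` for the nontrivial
brackets `A ∈ B` (non-singleton and different from `[n]`), together with the all-ones
vector `1 = ρ([n])`, form a linearly independent family in `ℝ^{n-1}`. -/
theorem rayGens_linearIndependent (n : ℕ) (hn : 2 ≤ n) (B : Set (Finset ℕ))
    (hB : IsBracketing n B) :
    LinearIndependent ℝ
      (fun o : Option {A : Finset ℕ // A ∈ B ∧ 2 ≤ A.card ∧ A ≠ Finset.Icc 1 n} =>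
        Option.elim o (fun _ : Fin (n - 1) => (1 : ℝ)) (fun A => rayGen n A.1)) := by
  classical
  obtain ⟨hB1, hB2, -, hB4⟩ := hB
  set ι := Option {A : Finset ℕ // A ∈ B ∧ 2 ≤ A.card ∧ A ≠ Finset.Icc 1 n} with hι
  set S : ι → Finset ℕ := fun o => Option.elim o (Finset.Icc 1 n) Subtype.val with hS
  have hSB : ∀ o : ι, S o ∈ B := by
    intro o; cases o with
    | none => exact hB2
    | some A => exact A.2.1
  have hex : ∀ o : ι, ∃ p : ℕ × ℕ, 1 ≤ p.1 ∧ p.1 < p.2 ∧ p.2 ≤ n ∧ S o = Finset.Icc p.1 p.2 := by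
    intro o
    cases o with
    | none => exact ⟨(1, n), le_rfl, by omega, le_rfl, rfl⟩
    | some A =>
      obtain ⟨i, j, h1, h2, h3, h4⟩ := hB1 A.1 A.2.1
      refine ⟨(i, j), h1, ?_, h3, h4⟩
      have hcard := A.2.2.1
      rw [h4, Nat.card_Icc] at hcard
      omega
  choose p hp1 hp2 hp3 hp4 using hex
  set a : ι → ℕ := fun o => (p o).1 with ha
  set b : ι → ℕ := fun o => (p o).2 with hb
  have hq1 : ∀ o : ι, 1 ≤ a o := hp1
  have hq2 : ∀ o : ι, a o < b o := hp2
  have hq3 : ∀ o : ι, b o ≤ n := hp3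
  have hq4 : ∀ o : ι, S o = Finset.Icc (a o) (b o) := hp4
  have hSinj : ∀ o o' : ι, S o = S o' → o = o' := by
    intro o o' h
    cases o with
    | none =>
      cases o' with
      | none => rfl
      | some A => exact absurd h.symm A.2.2.2
    | some A =>
      cases o' with
      | none => exact absurd h A.2.2.2
      | some A' => exact congrArg some (Subtype.ext h)
  have hmemS : ∀ (o : ι) (x : ℕ), x ∈ S o ↔ a o ≤ x ∧ x ≤ b o := by
    intro o x; rw [hp4 o, Finset.mem_Icc]
  have hinj : ∀ o o' : ι, a o = a o' → b o = b o' → o = o' := by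
    intro o o' h1 h2
    apply hSinj
    rw [hq4 o, hq4 o', h1, h2]
  have hlam : ∀ o o' : ι, a o ≤ b o' → a o' ≤ b o →
      (a o' ≤ a o ∧ b o ≤ b o') ∨ (a o ≤ a o' ∧ b o' ≤ b o) := by
    intro o o' h1 h2
    have hint : (S o ∩ S o').Nonempty := by
      refine ⟨max (a o) (a o'), Finset.mem_inter.mpr ⟨?_, ?_⟩⟩
      · rw [hmemS]; constructor
        · exact le_max_left _ _
        · have := hq2 o; have := hq2 o'; omega
      · rw [hmemS]; constructor
        · exact le_max_right _ _
        · have := hq2 o; have := hq2 o'; omega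
    rcases hB4 (S o) (hSB o) (S o') (hSB o') hint with h | h
    · left
      have e1 := (hmemS o' (a o)).mp (h ((hmemS o (a o)).mpr ⟨le_rfl, le_of_lt (hq2 o)⟩))
      have e2 := (hmemS o' (b o)).mp (h ((hmemS o (b o)).mpr ⟨le_of_lt (hq2 o), le_rfl⟩))
      omega
    · right
      have e1 := (hmemS o (a o')).mp (h ((hmemS o' (a o')).mpr ⟨le_rfl, le_of_lt (hq2 o')⟩))
      have e2 := (hmemS o (b o')).mp (h ((hmemS o' (b o')).mpr ⟨le_of_lt (hq2 o'), le_rfl⟩))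
      omega
  apply aux_lam n hn a b (fun o => ⟨hq1 o, hq2 o, hq3 o⟩) hinj hlam
  intro o i
  cases o with
  | none =>
    have hanone : a none = 1 ∧ b none = n := by
      have h1 : (1 : ℕ) ∈ S none := by
        show (1 : ℕ) ∈ Finset.Icc 1 n; rw [Finset.mem_Icc]; omega
      have h2 : n ∈ S none := by
        show n ∈ Finset.Icc 1 n; rw [Finset.mem_Icc]; omega
      rw [hmemS] at h1 h2
      have := hq1 none; have := hq3 none
      omega
    have hi := i.isLt
    simp only [Option.elim]
    rw [if_pos]
    rw [hanone.1, hanone.2]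
    omega
  | some A =>
    simp only [Option.elim]
    show rayGen n A.1 i = _
    have hSA : S (some A) = A.1 := rfl
    rw [rayGen]
    refine if_congr ?_ rfl rfl
    have m1 := hmemS (some A) ((i : ℕ) + 1)
    have m2 := hmemS (some A) ((i : ℕ) + 2)
    rw [hSA] at m1 m2
    rw [m1, m2]
    constructor <;> intro h <;> omega
end

section
/- Let T be a rooted tree of depth n (every leaf at distance at most n from the root, with at least one vertex at depth n) having exactly n + 2 vertices and containing a root-to-leaf path of length n. Then T has either 2 or 3 leaves, and: if T has 3 leaves, T is obtained from a path of length n by attaching two new leaves to (not necessarily distinct) vertices of the path; if T has 2 leaves, T is obtained from a path of length n by attaching a path of length two to a vertex of the path at depth at most n − 2. -/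
/-- The depth of a vertex `v` in a rooted tree given by a parent map `p` with root `r`:
the least `k` with `p^[k] v = r`, i.e. the distance from `v` to the root. -/
noncomputable def treeDepth {V : Type*} (p : V → V) (r : V) (v : V) : ℕ :=
  sInf {k | p^[k] v = r}

/-- A leaf of a rooted tree given by a parent map `p`: a vertex with no children. -/
def IsTreeLeaf {V : Type*} (p : V → V) (v : V) : Prop :=
  ∀ w, p w = v → w = v

private lemma treeDepth_spec {V : Type*} (p : V → V) (r : V)
    (hreach : ∀ v, ∃ k, p^[k] v = r) (v : V) :
    p^[treeDepth p r v] v = r :=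
  Nat.sInf_mem (hreach v)

private lemma treeDepth_iterate {V : Type*} (p : V → V) (r : V)
    (hreach : ∀ v, ∃ k, p^[k] v = r) (v : V) (i : ℕ) (h : i ≤ treeDepth p r v) :
    treeDepth p r (p^[i] v) = treeDepth p r v - i := by
  apply le_antisymm
  · apply Nat.sInf_le
    show p^[treeDepth p r v - i] (p^[i] v) = r
    rw [← Function.iterate_add_apply, Nat.sub_add_cancel h]
    exact treeDepth_spec p r hreach v
  · have h2 : p^[treeDepth p r (p^[i] v) + i] v = r := by
      rw [Function.iterate_add_apply]
      exact treeDepth_spec p r hreach (p^[i] v)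
    have h3 : treeDepth p r v ≤ treeDepth p r (p^[i] v) + i := Nat.sInf_le h2
    omega

private lemma treeDepth_succ' {V : Type*} (p : V → V) (r : V)
    (hreach : ∀ v, ∃ k, p^[k] v = r) (v : V) (hv : v ≠ r) :
    treeDepth p r v = treeDepth p r (p v) + 1 := by
  have h1 : 1 ≤ treeDepth p r v := by
    rcases Nat.eq_zero_or_pos (treeDepth p r v) with h | h
    · exfalso
      have h2 : p^[treeDepth p r v] v = r := treeDepth_spec p r hreach v
      rw [h, Function.iterate_zero_apply] at h2
      exact hv h2
    · exact h
  have h2 := treeDepth_iterate p r hreach v 1 h1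
  rw [Function.iterate_one] at h2
  omega

/-- Classification of the rooted trees whose categorical `n`-associahedron is
1-dimensional.  Let `T` be a rooted tree of depth `n` (parent map `p`, root `r`) having
exactly `n + 2` vertices in addition to the root (equivalently, exactly two pairs of
consecutive vertices at a common depth, as in the source) and containing a root-to-leaf
path of length `n`.  Then `T` has either `2` or `3` leaves, and: if `T` has `3` leaves,
then `T` is obtained from a path of length `n` by attaching two new leaves to (not
necessarily distinct) vertices of the path; if `T` has `2` leaves, then `T` is obtained
from a path of length `n` by attaching a path of length two to a vertex of the path at
depth at most `n − 2`. -/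
theorem oneDimensional_tree_classification {V : Type*} [Fintype V]
    (p : V → V) (r : V) (hroot : p r = r) (hreach : ∀ v, ∃ k, p^[k] v = r)
    (n : ℕ) (hcard : ({v : V | v ≠ r}).ncard = n + 2)
    (hdepth_le : ∀ v, treeDepth p r v ≤ n) (hdepth : ∃ v, treeDepth p r v = n) :
    ({v | IsTreeLeaf p v}.ncard = 3 ∧
      ∃ (c : Fin (n + 1) → V) (x y : V),
        Function.Injective c ∧ c 0 = r ∧
        (∀ k : Fin n, p (c k.succ) = c k.castSucc) ∧
        x ∉ Set.range c ∧ y ∉ Set.range c ∧ x ≠ y ∧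
        (Set.univ : Set V) = Set.range c ∪ {x, y} ∧
        IsTreeLeaf p x ∧ IsTreeLeaf p y ∧
        p x ∈ Set.range c ∧ p y ∈ Set.range c) ∨
    ({v | IsTreeLeaf p v}.ncard = 2 ∧
      ∃ (c : Fin (n + 1) → V) (x y : V),
        Function.Injective c ∧ c 0 = r ∧
        (∀ k : Fin n, p (c k.succ) = c k.castSucc) ∧
        x ∉ Set.range c ∧ y ∉ Set.range c ∧ x ≠ y ∧
        (Set.univ : Set V) = Set.range c ∪ {x, y} ∧
        IsTreeLeaf p y ∧ p y = x ∧
        ∃ d : Fin (n + 1), p x = c d ∧ (d : ℕ) ≤ n - 2) := by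
  obtain ⟨v₀, hv₀⟩ := hdepth
  -- basic depth facts
  have hdpos : ∀ v : V, v ≠ r → 1 ≤ treeDepth p r v := by
    intro v hv
    rcases Nat.eq_zero_or_pos (treeDepth p r v) with h | h
    · exfalso
      have h2 : p^[treeDepth p r v] v = r := treeDepth_spec p r hreach v
      rw [h, Function.iterate_zero_apply] at h2
      exact hv h2
    · exact h
  -- n ≥ 1
  have hn1 : 1 ≤ n := by
    have hne : {v : V | v ≠ r}.Nonempty := by
      apply Set.nonempty_of_ncard_ne_zero
      rw [hcard]
      omega
    obtain ⟨v, hv⟩ := hne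
    calc 1 ≤ treeDepth p r v := hdpos v hv
    _ ≤ n := hdepth_le v
  -- the spine
  set c : Fin (n + 1) → V := fun k => p^[n - (k : ℕ)] v₀ with hc
  have hdc : ∀ k : Fin (n + 1), treeDepth p r (c k) = (k : ℕ) := by
    intro k
    have hk : (k : ℕ) ≤ n := Fin.is_le k
    have h := treeDepth_iterate p r hreach v₀ (n - (k : ℕ)) (by rw [hv₀]; exact Nat.sub_le n (k : ℕ))
    rw [hv₀] at h
    rw [show c k = p^[n - (k : ℕ)] v₀ from rfl, h, Nat.sub_sub_self hk]
  have hcinj : Function.Injective c := by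
    intro a b hab
    have h : (a : ℕ) = (b : ℕ) := by rw [← hdc a, ← hdc b, hab]
    exact Fin.ext h
  have hc0 : c 0 = r := by
    have h : p^[treeDepth p r v₀] v₀ = r := treeDepth_spec p r hreach v₀
    rw [hv₀] at h
    simpa [hc] using h
  have hstep : ∀ k : Fin n, p (c k.succ) = c k.castSucc := by
    intro k
    have hk : (k : ℕ) < n := k.isLt
    show p (p^[n - ((k : ℕ) + 1)] v₀) = p^[n - (k : ℕ)] v₀
    rw [← Function.iterate_succ_apply' p]
    congr 1
    omega
  have hpcrange : ∀ k : Fin (n + 1), p (c k) ∈ Set.range c := by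
    intro k
    rcases Fin.eq_zero_or_eq_succ k with h | ⟨j, rfl⟩
    · rw [h, hc0, hroot, ← hc0]; exact ⟨0, rfl⟩
    · rw [hstep j]; exact ⟨_, rfl⟩
  -- cardinality: the complement of the spine has two elements
  have hcardV : Nat.card V = n + 3 := by
    have h := Set.ncard_add_ncard_compl ({v : V | v ≠ r})
    have hcompl : ({v : V | v ≠ r})ᶜ = {r} := by
      ext v; simp
    rw [hcompl, hcard, Set.ncard_singleton] at h
    omega
  have hrange : (Set.range c).ncard = n + 1 := by
    rw [← Nat.card_coe_set_eq, Nat.card_range_of_injective hcinj, Nat.card_eq_fintype_card,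
      Fintype.card_fin]
  have hcompl2 : ((Set.range c)ᶜ).ncard = 2 := by
    have h := Set.ncard_add_ncard_compl (Set.range c)
    rw [hrange, hcardV] at h
    omega
  obtain ⟨x, y, hxy, hpair⟩ := Set.ncard_eq_two.mp hcompl2
  have hxnc : x ∉ Set.range c := by
    have : x ∈ (Set.range c)ᶜ := by rw [hpair]; exact Set.mem_insert x {y}
    exact this
  have hync : y ∉ Set.range c := by
    have : y ∈ (Set.range c)ᶜ := by rw [hpair]; exact Set.mem_insert_of_mem x rfl
    exact this
  have huniveq : (Set.univ : Set V) = Set.range c ∪ {x, y} := by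
    rw [← hpair, Set.union_compl_self]
  have huniv : ∀ v : V, v ∈ Set.range c ∨ v = x ∨ v = y := by
    intro v
    have : v ∈ Set.range c ∪ {x, y} := huniveq ▸ Set.mem_univ v
    rcases this with h | h
    · exact Or.inl h
    · rcases h with h | h
      · exact Or.inr (Or.inl h)
      · exact Or.inr (Or.inr h)
  have hxr : x ≠ r := fun h => hxnc ⟨0, by rw [hc0, h]⟩
  have hyr : y ≠ r := fun h => hync ⟨0, by rw [hc0, h]⟩
  -- no fixed points or 2-cycles off the root
  have hfix : ∀ v : V, p v = v → v = r := by
    intro v h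
    have h2 : p^[treeDepth p r v] v = r := treeDepth_spec p r hreach v
    rw [Function.iterate_fixed h] at h2
    exact h2
  have hcyc : ¬(p x = y ∧ p y = x) := by
    rintro ⟨h1, h2⟩
    have key : ∀ k, p^[k] x = x ∨ p^[k] x = y := by
      intro k
      induction k with
      | zero => exact Or.inl rfl
      | succ k ih =>
        rcases ih with h | h <;> rw [Function.iterate_succ_apply', h]
        · exact Or.inr h1
        · exact Or.inl h2
    have h3 : p^[treeDepth p r x] x = r := treeDepth_spec p r hreach x
    rcases key (treeDepth p r x) with h | h <;> rw [h3] at h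
    · exact hxr h.symm
    · exact hyr h.symm
  have hpx3 : p x ∈ Set.range c ∨ p x = y := by
    rcases huniv (p x) with h | h | h
    · exact Or.inl h
    · exact absurd (hfix x h) hxr
    · exact Or.inr h
  have hpy3 : p y ∈ Set.range c ∨ p y = x := by
    rcases huniv (p y) with h | h | h
    · exact Or.inl h
    · exact Or.inr h
    · exact absurd (hfix y h) hyr
  -- depth of a vertex whose parent is on the spine
  have hdpar : ∀ v : V, v ≠ r → ∀ d : Fin (n + 1), p v = c d → treeDepth p r v = (d : ℕ) + 1 := by
    intro v hv d hd
    rw [treeDepth_succ' p r hreach v hv, hd, hdc]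
  -- leaves
  have hnotleaf : ∀ k : Fin (n + 1), (k : ℕ) < n → ¬IsTreeLeaf p (c k) := by
    intro k hk hleaf
    set j : Fin n := ⟨(k : ℕ), hk⟩ with hj
    have h1 : p (c j.succ) = c k := by
      have h0 := hstep j
      rwa [show j.castSucc = k from Fin.ext rfl] at h0
    have h2 := hcinj (hleaf (c j.succ) h1)
    have h3 : (j.succ : Fin (n+1)).val = (k : ℕ) := congrArg Fin.val h2
    simp [Fin.val_succ, hj] at h3
  have hlastne : ∀ k : Fin (n + 1), p (c k) ≠ c (Fin.last n) := by
    intro k hk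
    rcases Fin.eq_zero_or_eq_succ k with h | ⟨j, rfl⟩
    · rw [h, hc0, hroot, ← hc0] at hk
      have := congrArg Fin.val (hcinj hk)
      simp [Fin.last] at this
      omega
    · rw [hstep j] at hk
      have := congrArg Fin.val (hcinj hk)
      simp [Fin.last] at this
      have := j.isLt
      omega
  have hlastleaf : p x ≠ c (Fin.last n) → p y ≠ c (Fin.last n) → IsTreeLeaf p (c (Fin.last n)) := by
    intro hx hy w hw
    exfalso
    rcases huniv w with ⟨k, rfl⟩ | rfl | rfl
    · exact hlastne k hw
    · exact hx hw
    · exact hy hw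
  -- parent of an off-spine vertex is not the last spine vertex
  have hofflast : ∀ v : V, v ∉ Set.range c → ∀ d : Fin (n + 1), p v = c d → (d : ℕ) ≤ n - 1 := by
    intro v hv d hd
    have hvr : v ≠ r := fun h => hv ⟨0, by rw [hc0, h]⟩
    have := hdpar v hvr d hd
    have := hdepth_le v
    omega
  have hnelast : ∀ v : V, v ∉ Set.range c → p v ∈ Set.range c → p v ≠ c (Fin.last n) := by
    intro v hv ⟨d, hd⟩ h
    have h2 := hofflast v hv d hd.symm
    rw [← hd] at h
    have := congrArg Fin.val (hcinj h)
    simp [Fin.last] at this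
    omega
  rcases hpx3 with hpx | hpx
  · rcases hpy3 with hpy | hpy
    · -- three leaves: x and y both attach to the spine
      left
      have hlx : IsTreeLeaf p x := by
        intro w hw
        rcases huniv w with ⟨k, rfl⟩ | rfl | rfl
        · exact absurd (hw ▸ hpcrange k) hxnc
        · rfl
        · exact absurd (hw ▸ hpy) hxnc
      have hly : IsTreeLeaf p y := by
        intro w hw
        rcases huniv w with ⟨k, rfl⟩ | rfl | rfl
        · exact absurd (hw ▸ hpcrange k) hync
        · exact absurd (hw ▸ hpx) hync
        · rfl
      have hll : IsTreeLeaf p (c (Fin.last n)) :=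
        hlastleaf (hnelast x hxnc hpx) (hnelast y hync hpy)
      have hset : {v | IsTreeLeaf p v} = {x, y, c (Fin.last n)} := by
        ext v
        simp only [Set.mem_setOf_eq, Set.mem_insert_iff, Set.mem_singleton_iff]
        constructor
        · intro hv
          rcases huniv v with ⟨k, rfl⟩ | rfl | rfl
          · right; right
            by_cases hk : (k : ℕ) < n
            · exact absurd hv (hnotleaf k hk)
            · congr 1
              exact Fin.ext (by have := k.isLt; simp [Fin.last]; omega)
          · left; rfl
          · right; left; rfl
        · rintro (rfl | rfl | rfl)
          exacts [hlx, hly, hll]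
      constructor
      · rw [hset]
        exact Set.ncard_eq_three.mpr ⟨x, y, c (Fin.last n), hxy,
          fun h => hxnc (h ▸ ⟨_, rfl⟩), fun h => hync (h ▸ ⟨_, rfl⟩), rfl⟩
      · exact ⟨c, x, y, hcinj, hc0, hstep, hxnc, hync, hxy, huniveq, hlx, hly, hpx, hpy⟩
    · -- two leaves: p y = x, chain hanging off the spine
      right
      obtain ⟨d, hd⟩ := hpx
      have hdx : treeDepth p r x = (d : ℕ) + 1 := hdpar x hxr d hd.symm
      have hdy : treeDepth p r y = (d : ℕ) + 2 := by
        rw [treeDepth_succ' p r hreach y hyr, hpy, hdx]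
      have hdn : (d : ℕ) + 2 ≤ n := hdy ▸ hdepth_le y
      have hly : IsTreeLeaf p y := by
        intro w hw
        rcases huniv w with ⟨k, rfl⟩ | rfl | rfl
        · exact absurd (hw ▸ hpcrange k) hync
        · exact absurd ⟨d, hd.trans hw⟩ hync
        · rfl
      have hll : IsTreeLeaf p (c (Fin.last n)) := by
        apply hlastleaf (hnelast x hxnc ⟨d, hd⟩)
        rw [hpy]
        exact fun h => hxnc (h ▸ ⟨_, rfl⟩)
      have hnlx : ¬IsTreeLeaf p x := fun h => hxy (h y hpy).symm
      have hset : {v | IsTreeLeaf p v} = {y, c (Fin.last n)} := by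
        ext v
        simp only [Set.mem_setOf_eq, Set.mem_insert_iff, Set.mem_singleton_iff]
        constructor
        · intro hv
          rcases huniv v with ⟨k, rfl⟩ | rfl | rfl
          · right
            by_cases hk : (k : ℕ) < n
            · exact absurd hv (hnotleaf k hk)
            · congr 1
              exact Fin.ext (by have := k.isLt; simp [Fin.last]; omega)
          · exact absurd hv hnlx
          · left; rfl
        · rintro (rfl | rfl)
          exacts [hly, hll]
      constructor
      · rw [hset]
        exact Set.ncard_eq_two.mpr ⟨y, c (Fin.last n),
          fun h => hync (h ▸ ⟨_, rfl⟩), rfl⟩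
      · refine ⟨c, x, y, hcinj, hc0, hstep, hxnc, hync, hxy, huniveq, hly, hpy, d, ?_, ?_⟩
        · exact hd.symm
        · omega
  · -- p x = y: same as previous case with x and y swapped
    right
    have hpy : p y ∈ Set.range c := by
      rcases hpy3 with h | h
      · exact h
      · exact absurd ⟨hpx, h⟩ hcyc
    obtain ⟨d, hd⟩ := hpy
    have hdy : treeDepth p r y = (d : ℕ) + 1 := hdpar y hyr d hd.symm
    have hdx : treeDepth p r x = (d : ℕ) + 2 := by
      rw [treeDepth_succ' p r hreach x hxr, hpx, hdy]
    have hdn : (d : ℕ) + 2 ≤ n := hdx ▸ hdepth_le x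
    have hlx : IsTreeLeaf p x := by
      intro w hw
      rcases huniv w with ⟨k, rfl⟩ | rfl | rfl
      · exact absurd (hw ▸ hpcrange k) hxnc
      · rfl
      · exact absurd (hw ▸ ⟨d, hd⟩ : x ∈ Set.range c) hxnc
    have hll : IsTreeLeaf p (c (Fin.last n)) := by
      apply hlastleaf _ (hnelast y hync ⟨d, hd⟩)
      rw [hpx]
      exact fun h => hync (h ▸ ⟨_, rfl⟩)
    have hnly : ¬IsTreeLeaf p y := fun h => hxy (h x hpx)
    have hset : {v | IsTreeLeaf p v} = {x, c (Fin.last n)} := by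
      ext v
      simp only [Set.mem_setOf_eq, Set.mem_insert_iff, Set.mem_singleton_iff]
      constructor
      · intro hv
        rcases huniv v with ⟨k, rfl⟩ | rfl | rfl
        · right
          by_cases hk : (k : ℕ) < n
          · exact absurd hv (hnotleaf k hk)
          · congr 1
            exact Fin.ext (by have := k.isLt; simp [Fin.last]; omega)
        · left; rfl
        · exact absurd hv hnly
      · rintro (rfl | rfl)
        exacts [hlx, hll]
    constructor
    · rw [hset]
      exact Set.ncard_eq_two.mpr ⟨x, c (Fin.last n),
        fun h => hxnc (h ▸ ⟨_, rfl⟩), rfl⟩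
    · refine ⟨c, y, x, hcinj, hc0, hstep, hync, hxnc, hxy.symm, ?_, hlx, hpx, d, ?_, ?_⟩
      · rw [huniveq, Set.pair_comm x y]
      · exact hd.symm
      · omega
end
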